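/- arXiv:2403.14196 — 5 statements merged into one kernel-verified Lean document; each statement's English description precedes it below -/
import Mathlib

section
/- Let A be a p×n complex matrix and W a nonzero n×p complex matrix. Suppose X₁ and X₂ are p×n matrices each satisfying: X·W·A·W·X = X, A·W·X₁ = A·W·X₂, and X₁·W·A = X₂·W·A. Then X₁ = X₂. -/
theorem Matrix.eq_of_outerInverse_of_mul_eq {m n α : Type*} [Fintype m] [Fintype n]
    [NonUnitalSemiring α] {A X₁ X₂ : Matrix m n α} {W : Matrix n m α}
    (h1 : X₁ * W * A * W * X₁ = X₁) (h2 : X₂ * W * A * W * X₂ = X₂)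
    (h3 : A * W * X₁ = A * W * X₂) (h4 : X₁ * W * A = X₂ * W * A) :
    X₁ = X₂ :=
  calc X₁ = X₁ * W * A * W * X₁ := h1.symm
    _ = X₂ * W * (A * W * X₁) := by rw [h4]; simp only [Matrix.mul_assoc]
    _ = X₂ * W * (A * W * X₂) := by rw [h3]
    _ = X₂ := by simp only [← Matrix.mul_assoc]; exact h2

theorem stmt_2_general {p n : ℕ} (A X₁ X₂ : Matrix (Fin p) (Fin n) ℂ)
    (W : Matrix (Fin n) (Fin p) ℂ)
    (h1 : X₁ * W * A * W * X₁ = X₁) (h2 : X₂ * W * A * W * X₂ = X₂)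
    (h3 : A * W * X₁ = A * W * X₂) (h4 : X₁ * W * A = X₂ * W * A) :
    X₁ = X₂ :=
  Matrix.eq_of_outerInverse_of_mul_eq h1 h2 h3 h4

theorem stmt_2 {p n : ℕ} (A X₁ X₂ : Matrix (Fin p) (Fin n) ℂ)
    (W : Matrix (Fin n) (Fin p) ℂ) (hW : W ≠ 0)
    (h1 : X₁ * W * A * W * X₁ = X₁) (h2 : X₂ * W * A * W * X₂ = X₂)
    (h3 : A * W * X₁ = A * W * X₂) (h4 : X₁ * W * A = X₂ * W * A) :
    X₁ = X₂ :=
  stmt_2_general A X₁ X₂ W h1 h2 h3 h4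
end

section
/- Let A be a p×n complex matrix, W a nonzero n×p complex matrix, k = max{Ind(AW), Ind(WA)}, m a positive integer, and let G = A^{w_m,W} denote the W-weighted m-weak group inverse of A (the unique solution of AWG = (A^{⊕,W}W)^m (AW)^{m-1} A and AWGWG = G). Define X = G · P, where P is the orthogonal projector onto range((WA)^m). Then X·W·A·W·X = X. -/
open Matrix

/-- `P` is the orthogonal projector onto the subspace `S`. -/
def IsOrthProjOnto {p : ℕ} (P : Matrix (Fin p) (Fin p) ℂ)
    (S : Submodule ℂ (Fin p → ℂ)) : Prop :=
  P * P = P ∧ Pᴴ = P ∧ LinearMap.range P.mulVecLin = S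

/-- `k` is the index of the square matrix `M`. -/
def MatIndex {p : ℕ} (M : Matrix (Fin p) (Fin p) ℂ) (k : ℕ) : Prop :=
  (M ^ k).rank = (M ^ (k + 1)).rank ∧
    ∀ j, (M ^ j).rank = (M ^ (j + 1)).rank → k ≤ j

/-!
Put `B = W * A`, `Q = W * Z` and `g = W * G`, all square of size `n`. The hypotheses become
`B * Q = Pk`, `Pk * Q = Q = Q * Pk`, `B * g = Q ^ m * B ^ m` and `B * g * g = g`. Since
`B ^ m * Q ^ m = Pk`, the matrix `B * g` is idempotent, and as `g` is a left multiple of `B * g`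
this gives `g * (B * g) = g`, i.e. `G * (W * A * W * G) = G`. From `Q = B ^ m * Q ^ (m + 1)` the
range of `W * A * W * G` lies in that of `(W * A) ^ m`, so `P` fixes it. Hence
`X * W * A * W * X = G * (P * (W * A * W * G)) * P = G * P = X`.
-/

namespace Matrix

section CommRing

variable {R : Type*} [CommRing R] {l m n : Type*} [Fintype m] [Fintype n]

theorem mul_eq_zero_iff_range_le_ker (M : Matrix l m R) (N : Matrix m n R) :
    M * N = 0 ↔ LinearMap.range N.mulVecLin ≤ LinearMap.ker M.mulVecLin := by
  classical
  rw [LinearMap.range_le_ker_iff, ← mulVecLin_mul, ← toLin'_apply', LinearEquiv.map_eq_zero_iff]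

theorem exists_eq_mul_of_range_le (M : Matrix l m R) (N : Matrix l n R)
    (h : LinearMap.range N.mulVecLin ≤ LinearMap.range M.mulVecLin) :
    ∃ T : Matrix m n R, N = M * T := by
  classical
  obtain ⟨T, hT⟩ := Module.projective_lifting_property M.mulVecLin.rangeRestrict
    (N.mulVecLin.codRestrict _ fun v => h (LinearMap.mem_range_self _ v))
    M.mulVecLin.surjective_rangeRestrict
  refine ⟨LinearMap.toMatrix' T, toLin'.injective ?_⟩
  rw [toLin'_mul, toLin'_toMatrix', toLin'_apply', toLin'_apply']
  exact LinearMap.ext fun v => congrArg Subtype.val (LinearMap.congr_fun hT v).symm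

theorem range_mul_le (M : Matrix l m R) (N : Matrix m n R) :
    LinearMap.range (M * N).mulVecLin ≤ LinearMap.range M.mulVecLin := by
  rw [mulVecLin_mul]
  exact LinearMap.range_comp_le_range _ _

theorem mul_eq_self_of_range_le {P : Matrix m m R} {M : Matrix m n R} (hP : P * P = P)
    (h : LinearMap.range M.mulVecLin ≤ LinearMap.range P.mulVecLin) : P * M = M := by
  obtain ⟨T, rfl⟩ := exists_eq_mul_of_range_le P M h
  rw [← Matrix.mul_assoc, hP]

theorem mul_mul_pow [DecidableEq m] [DecidableEq n] (U : Matrix m n R) (V : Matrix n m R)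
    (j : ℕ) : U * (V * U) ^ j = (U * V) ^ j * U := by
  induction j with
  | zero => simp
  | succ j ih => rw [pow_succ', ← Matrix.mul_assoc, ← Matrix.mul_assoc, Matrix.mul_assoc, ih,
      ← Matrix.mul_assoc, ← pow_succ']

theorem mul_pow_mul_pow_mul [DecidableEq m] [DecidableEq n] (W : Matrix n m R)
    (Z A : Matrix m n R) (i j : ℕ) :
    W * ((Z * W) ^ i * (A * W) ^ j * A) = (W * Z) ^ i * (W * A) ^ (j + 1) := by
  rw [Matrix.mul_assoc _ _ A, ← mul_mul_pow A W, ← Matrix.mul_assoc, mul_mul_pow W Z,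
    Matrix.mul_assoc, ← Matrix.mul_assoc W A, ← pow_succ']

theorem range_mul_le_range_pow_of_range_le [DecidableEq m] [DecidableEq n] {A : Matrix m n R}
    {W : Matrix n m R} {Z : Matrix m n R} {k : ℕ}
    (hZ : LinearMap.range Z.mulVecLin ≤ LinearMap.range ((A * W) ^ k).mulVecLin) :
    LinearMap.range (W * Z).mulVecLin ≤ LinearMap.range ((W * A) ^ k).mulVecLin := by
  obtain ⟨T, rfl⟩ := exists_eq_mul_of_range_le _ _ hZ
  rw [← Matrix.mul_assoc, mul_mul_pow, Matrix.mul_assoc]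
  exact range_mul_le _ _

end CommRing

section Field

variable {K : Type*} [Field K] {m n : Type*} [Fintype m] [Fintype n] [DecidableEq n]

theorem ker_pow_eq_of_rank_pow_eq {M : Matrix n n K} {t s : ℕ}
    (h : (M ^ t).rank = (M ^ (t + 1)).rank) (hts : t ≤ s) :
    LinearMap.ker (M ^ s).mulVecLin = LinearMap.ker (M ^ t).mulVecLin := by
  have hker : LinearMap.ker (toLin' M ^ t) = LinearMap.ker (toLin' M ^ (t + 1)) := by
    rw [← toLin'_pow, ← toLin'_pow, toLin'_apply', toLin'_apply']
    refine Submodule.eq_of_le_of_finrank_eq ?_ ?_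
    · rw [pow_succ', mulVecLin_mul]
      exact LinearMap.ker_le_ker_comp _ _
    · have := (M ^ t).mulVecLin.finrank_range_add_finrank_ker
      have := (M ^ (t + 1)).mulVecLin.finrank_range_add_finrank_ker
      unfold rank at h
      omega
  obtain ⟨j, rfl⟩ := Nat.exists_eq_add_of_le hts
  rw [← toLin'_apply', ← toLin'_apply', toLin'_pow, toLin'_pow]
  exact (Module.End.ker_pow_constant hker j).symm

theorem pow_mul_eq_zero_of_rank_pow_eq {M : Matrix n n K} {Y : Matrix n m K} {t s u : ℕ}
    (h : (M ^ t).rank = (M ^ (t + 1)).rank) (hts : t ≤ s) (hsu : s ≤ u)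
    (hY : M ^ u * Y = 0) : M ^ s * Y = 0 := by
  rw [mul_eq_zero_iff_range_le_ker] at hY ⊢
  rwa [ker_pow_eq_of_rank_pow_eq h hts, ← ker_pow_eq_of_rank_pow_eq h (hts.trans hsu)]

/- `Z - Z * Pk` lies in `range (A * W) ^ k` and is killed by `W * A * W`; as `k` is at least the
index of `A * W`, the powers of `A * W` are injective on that range. -/
theorem weightedCoreEP_mul_proj {A : Matrix n m K} {W : Matrix m n K} {Z : Matrix n m K}
    {Pk : Matrix m m K} {k₁ k : ℕ}
    (hAW : ((A * W) ^ k₁).rank = ((A * W) ^ (k₁ + 1)).rank) (hk : k₁ ≤ k) (hPk : Pk * Pk = Pk)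
    (hZ1 : W * A * W * Z = Pk)
    (hZ2 : LinearMap.range Z.mulVecLin ≤ LinearMap.range ((A * W) ^ k).mulVecLin) :
    Z * Pk = Z := by
  obtain ⟨T, hT⟩ := exists_eq_mul_of_range_le _ _ hZ2
  have hD : Z - Z * Pk = (A * W) ^ k * (T - T * Pk) := by
    rw [hT, Matrix.mul_sub, Matrix.mul_assoc]
  have hWAWD : W * A * W * (Z - Z * Pk) = 0 := by
    rw [Matrix.mul_sub, ← Matrix.mul_assoc, hZ1, hPk, sub_self]
  have hAW2 : (A * W) ^ (2 + k) * (T - T * Pk) = 0 := by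
    calc (A * W) ^ (2 + k) * (T - T * Pk) = A * (W * A * W * ((A * W) ^ k * (T - T * Pk))) := by
          rw [pow_add, pow_two]
          simp only [Matrix.mul_assoc]
      _ = 0 := by rw [← hD, hWAWD, Matrix.mul_zero]
  have hZPk := pow_mul_eq_zero_of_rank_pow_eq hAW hk (by omega) hAW2
  rw [← hD, sub_eq_zero] at hZPk
  exact hZPk.symm

end Field

end Matrix

section Monoid

variable {M₀ : Type*} [Monoid M₀] {B Q E : M₀}

theorem pow_succ_mul_pow_succ_eq (hBQ : B * Q = E) (hEQ : E * Q = Q) (j : ℕ) :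
    B ^ (j + 1) * Q ^ (j + 1) = E := by
  induction j with
  | zero => simpa using hBQ
  | succ j ih =>
    calc B ^ (j + 1 + 1) * Q ^ (j + 1 + 1) = B * (B ^ (j + 1) * Q ^ (j + 1)) * Q := by
          rw [pow_succ' B, pow_succ Q]
          simp only [mul_assoc]
      _ = E := by rw [ih, mul_assoc, hEQ, hBQ]

theorem pow_mul_pow_succ_eq (h : B * (Q * Q) = Q) (j : ℕ) : B ^ j * Q ^ (j + 1) = Q := by
  induction j with
  | zero => simp
  | succ j ih =>
    calc B ^ (j + 1) * Q ^ (j + 1 + 1) = B ^ j * (B * (Q * Q)) * Q ^ j := by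
          rw [pow_succ B, pow_succ' Q, pow_succ' Q]
          simp only [mul_assoc]
      _ = Q := by rw [h, mul_assoc, ← pow_succ', ih]

theorem pow_succ_mul_eq_pow_mul (h : B * (Q * Q) = Q) (i j : ℕ) (X : M₀) :
    Q ^ (i + 1) * X = B ^ j * (Q ^ (j + 1) * Q ^ i * X) := by
  calc Q ^ (i + 1) * X = Q * (Q ^ i * X) := by rw [pow_succ', mul_assoc]
    _ = B ^ j * Q ^ (j + 1) * (Q ^ i * X) := by rw [pow_mul_pow_succ_eq h]
    _ = B ^ j * (Q ^ (j + 1) * Q ^ i * X) := by simp only [mul_assoc]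

theorem mul_mul_eq_self_of_mul_eq_pow_mul_pow (hBQ : B * Q = E) (hEQ : E * Q = Q)
    (hQE : Q * E = Q) {g : M₀} {j : ℕ} (hBg : B * g = Q ^ (j + 1) * B ^ (j + 1))
    (hg : B * g * g = g) : g * (B * g) = g := by
  have hBg2 : B * g * (B * g) = B * g := by
    calc B * g * (B * g) = Q ^ j * (Q * E) * B ^ (j + 1) := by
          rw [hBg, ← pow_succ_mul_pow_succ_eq hBQ hEQ j, pow_succ Q]
          simp only [mul_assoc]
      _ = B * g := by rw [hQE, ← pow_succ, hBg]
  have hgY : g = Q ^ (j + 1) * B ^ j * (B * g) := by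
    calc g = B * g * g := hg.symm
      _ = Q ^ (j + 1) * (B ^ j * B) * g := by rw [hBg, pow_succ B j]
      _ = Q ^ (j + 1) * B ^ j * (B * g) := by simp only [mul_assoc]
  calc g * (B * g) = Q ^ (j + 1) * B ^ j * (B * g) * (B * g) := by rw [← hgY]
    _ = g := by rw [mul_assoc, hBg2, ← hgY]

end Monoid

theorem stmt_8_general {p n : ℕ} (A : Matrix (Fin p) (Fin n) ℂ)
    (W : Matrix (Fin n) (Fin p) ℂ)
    (k₁ k₂ k m : ℕ) (hm : 0 < m)
    (hk₁ : MatIndex (A * W) k₁)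
    (hk : k = max k₁ k₂)
    -- `Pk` is the orthogonal projector onto range((WA)^k)
    (Pk : Matrix (Fin n) (Fin n) ℂ)
    (hPk : IsOrthProjOnto Pk (LinearMap.range ((W * A) ^ k).mulVecLin))
    -- `Z` is the W-weighted core-EP inverse of `A`
    (Z : Matrix (Fin p) (Fin n) ℂ)
    (hZ1 : W * A * W * Z = Pk)
    (hZ2 : LinearMap.range Z.mulVecLin ≤ LinearMap.range ((A * W) ^ k).mulVecLin)
    -- `G` is the W-weighted m-weak group inverse of `A`
    (G : Matrix (Fin p) (Fin n) ℂ)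
    (hG1 : A * W * G = (Z * W) ^ m * (A * W) ^ (m - 1) * A)
    (hG2 : A * W * G * W * G = G)
    -- `P` is the orthogonal projector onto range((WA)^m)
    (P : Matrix (Fin n) (Fin n) ℂ)
    (hP : IsOrthProjOnto P (LinearMap.range ((W * A) ^ m).mulVecLin))
    -- `X` is the W-weighted m-weak core inverse of `A`
    (X : Matrix (Fin p) (Fin n) ℂ) (hX : X = G * P) :
    X * W * A * W * X = X := by
  obtain ⟨m, rfl⟩ : ∃ m', m = m' + 1 := ⟨m - 1, by omega⟩
  obtain ⟨hPk_idem, -, hPk_range⟩ := hPk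
  obtain ⟨hP_idem, -, hP_range⟩ := hP
  subst hX hk
  have hBQ : W * A * (W * Z) = Pk := by rw [← hZ1]; simp only [Matrix.mul_assoc]
  have hPkQ : Pk * (W * Z) = W * Z :=
    mul_eq_self_of_range_le hPk_idem (hPk_range ▸ range_mul_le_range_pow_of_range_le hZ2)
  have hQPk : W * Z * Pk = W * Z := by
    rw [Matrix.mul_assoc, weightedCoreEP_mul_proj hk₁.1 (le_max_left _ _) hPk_idem hZ1 hZ2]
  have hBQQ : W * A * (W * Z * (W * Z)) = W * Z := by rw [← Matrix.mul_assoc, hBQ, hPkQ]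
  have hBg : W * A * (W * G) = (W * Z) ^ (m + 1) * (W * A) ^ (m + 1) := by
    rw [Nat.add_sub_cancel] at hG1
    rw [← mul_pow_mul_pow_mul, ← hG1]
    simp only [Matrix.mul_assoc]
  have hG : A * (W * G) * (W * G) = G := by simpa only [Matrix.mul_assoc] using hG2
  have hg : W * A * (W * G) * (W * G) = W * G := by
    simpa only [Matrix.mul_assoc] using congrArg (W * ·) hG2
  have hGBg : G * (W * A * (W * G)) = G := by
    calc G * (W * A * (W * G)) = A * (W * G) * (W * G * (W * A * (W * G))) := by
          rw [← Matrix.mul_assoc (A * (W * G)), hG]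
      _ = G := by rw [mul_mul_eq_self_of_mul_eq_pow_mul_pow hBQ hPkQ hQPk hBg hg, hG]
  have hPBg : P * (W * A * (W * G)) = W * A * (W * G) := by
    refine mul_eq_self_of_range_le hP_idem ?_
    rw [hP_range, hBg, pow_succ_mul_eq_pow_mul hBQQ m (m + 1)]
    exact range_mul_le _ _
  calc G * P * W * A * W * (G * P) = G * (P * (W * A * (W * G))) * P := by
        simp only [Matrix.mul_assoc]
    _ = G * P := by rw [hPBg, hGBg]

theorem stmt_8 {p n : ℕ} (A : Matrix (Fin p) (Fin n) ℂ)
    (W : Matrix (Fin n) (Fin p) ℂ) (hW : W ≠ 0)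
    (k₁ k₂ k m : ℕ) (hm : 0 < m)
    (hk₁ : MatIndex (A * W) k₁) (hk₂ : MatIndex (W * A) k₂)
    (hk : k = max k₁ k₂)
    -- `Pk` is the orthogonal projector onto range((WA)^k)
    (Pk : Matrix (Fin n) (Fin n) ℂ)
    (hPk : IsOrthProjOnto Pk (LinearMap.range ((W * A) ^ k).mulVecLin))
    -- `Z` is the W-weighted core-EP inverse of `A`
    (Z : Matrix (Fin p) (Fin n) ℂ)
    (hZ1 : W * A * W * Z = Pk)
    (hZ2 : LinearMap.range Z.mulVecLin ≤ LinearMap.range ((A * W) ^ k).mulVecLin)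
    -- `G` is the W-weighted m-weak group inverse of `A`
    (G : Matrix (Fin p) (Fin n) ℂ)
    (hG1 : A * W * G = (Z * W) ^ m * (A * W) ^ (m - 1) * A)
    (hG2 : A * W * G * W * G = G)
    -- `P` is the orthogonal projector onto range((WA)^m)
    (P : Matrix (Fin n) (Fin n) ℂ)
    (hP : IsOrthProjOnto P (LinearMap.range ((W * A) ^ m).mulVecLin))
    -- `X` is the W-weighted m-weak core inverse of `A`
    (X : Matrix (Fin p) (Fin n) ℂ) (hX : X = G * P) :
    X * W * A * W * X = X :=
  stmt_8_general A W k₁ k₂ k m hm hk₁ hk Pk hPk Z hZ1 hZ2 G hG1 hG2 P hP X hX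
end

section
/- Let A be a p×n complex matrix, W a nonzero n×p complex matrix, k = max{Ind(AW), Ind(WA)}, m a positive integer, and let X = A^{⊙_m,W} = A^{w_m,W}·P_{(WA)^m} be the W-weighted m-weak core inverse. Then X·W·(AW)^{k+1} = (AW)^k. -/
open Matrix

/-!
Write `S = A W` and `T = W A`. The weighted core-EP inverse `Z` satisfies `S² (Z W) Sᵏ = Sᵏ⁺¹`,
because `A Tᵏ W = Sᵏ⁺¹` and `W A W Z` is the projector fixing `Tᵏ`. As `range Z ⊆ range Sᵏ` and
`ker Sᵏ⁺² = ker Sᵏ`, the factor `S²` cancels: `Z W Sᵏ⁺¹ = Sᵏ`, hence `(Z W)ⁱ Sⁱ⁺ʲ = Sʲ` for `j ≥ k`.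
With `g = G W` the two equations of the weak group inverse read `S g = (Z W)ᵐ Sᵐ` and `S g g = g`,
which turn this into `G W Sᵏ⁺¹ = Sᵏ`. Finally `P` fixes `W Sᵏ⁺¹ = Tᵏ⁺¹ W`, since the ranges of the
powers of `T` have stabilised from `k` on, so `range Tᵏ⁺¹ ⊆ range Tᵐ` whatever `m` is.
-/

theorem pow_mul_pow_add_eq_pow {M : Type*} [Monoid M] {x s : M} {k : ℕ}
    (hx : x * s ^ (k + 1) = s ^ k) (i : ℕ) {j : ℕ} (hj : k ≤ j) : x ^ i * s ^ (i + j) = s ^ j := by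
  have hx' : ∀ j, k ≤ j → x * s ^ (j + 1) = s ^ j := by
    intro j hj
    obtain ⟨d, rfl⟩ := Nat.exists_eq_add_of_le hj
    rw [add_right_comm, pow_add, ← mul_assoc, hx, pow_add]
  induction i generalizing j with
  | zero => simp
  | succ i ih =>
    rw [pow_succ, mul_assoc, add_right_comm, hx' _ (hj.trans (Nat.le_add_left j i)), ih hj]

theorem mul_pow_succ_eq_pow_of_weak_group {M : Type*} [Monoid M] {x s g : M} {k m : ℕ}
    (hm : 0 < m) (hx : x * s ^ (k + 1) = s ^ k) (hg₁ : s * g = x ^ m * s ^ m)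
    (hg₂ : s * g * g = g) : g * s ^ (k + 1) = s ^ k := by
  have hsg : s * g * s ^ (k + 1) = s ^ (k + 1) := by
    rw [hg₁, mul_assoc, ← pow_add, pow_mul_pow_add_eq_pow hx m (Nat.le_succ k)]
  obtain ⟨m, rfl⟩ : ∃ m', m = m' + 1 := ⟨m - 1, by omega⟩
  calc g * s ^ (k + 1) = s * g * (g * s ^ (k + 1)) := by rw [← mul_assoc, hg₂]
    _ = x ^ (m + 1) * s ^ (m + 1) * (g * s ^ (k + 1)) := by rw [hg₁]
    _ = x ^ (m + 1) * (s ^ m * (s * g * s ^ (k + 1))) := by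
        rw [pow_succ s m]; simp only [mul_assoc]
    _ = s ^ k := by
        rw [hsg, ← pow_add, ← add_assoc, add_right_comm, pow_mul_pow_add_eq_pow hx _ le_rfl]

namespace Matrix

section Semiring

variable {R : Type*} [CommSemiring R] {l m n o : Type*} [Fintype n] [Fintype o]

theorem exists_eq_mul_of_range_mulVecLin_le {B : Matrix m n R} {C : Matrix m o R}
    (h : LinearMap.range C.mulVecLin ≤ LinearMap.range B.mulVecLin) :
    ∃ U : Matrix n o R, C = B * U := by
  rw [range_mulVecLin] at h
  choose u hu using fun c => h (Submodule.subset_span ⟨c, rfl⟩)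
  refine ⟨of fun j c => u c j, ?_⟩
  ext i c
  simpa [mul_apply, mulVec, dotProduct] using (congrFun (hu c) i).symm

theorem mul_eq_self_of_range_mulVecLin_le {P : Matrix n n R} (hP : P * P = P)
    {M : Matrix n o R} (h : LinearMap.range M.mulVecLin ≤ LinearMap.range P.mulVecLin) :
    P * M = M := by
  obtain ⟨U, rfl⟩ := exists_eq_mul_of_range_mulVecLin_le h
  rw [← Matrix.mul_assoc, hP]

theorem mul_eq_zero_of_ker_mulVecLin_le [DecidableEq o] {B : Matrix l n R} {C : Matrix m n R}
    (h : LinearMap.ker B.mulVecLin ≤ LinearMap.ker C.mulVecLin) {F : Matrix n o R}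
    (hF : B * F = 0) : C * F = 0 := by
  have hBF : LinearMap.range F.mulVecLin ≤ LinearMap.ker B.mulVecLin := by
    rw [LinearMap.range_le_ker_iff, ← mulVecLin_mul, hF, mulVecLin_zero]
  apply toLin'.injective
  change (C * F).mulVecLin = toLin' 0
  rw [map_zero, mulVecLin_mul]
  exact LinearMap.range_le_ker_iff.mp (hBF.trans h)

variable [DecidableEq n] [DecidableEq o]

theorem mul_mul_pow_comm (A : Matrix n o R) (W : Matrix o n R) (j : ℕ) :
    A * (W * A) ^ j = (A * W) ^ j * A := by
  induction j with
  | zero => simp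
  | succ j ih => rw [pow_succ, pow_succ, ← Matrix.mul_assoc, ih]; simp only [Matrix.mul_assoc]

theorem sq_mul_mul_pow_eq_pow_succ {A Z : Matrix n o R} {W : Matrix o n R} {Q : Matrix o o R}
    {k : ℕ} (hQ : Q * (W * A) ^ k = (W * A) ^ k) (hZ : W * A * W * Z = Q) :
    A * W * (A * W) * (Z * W) * (A * W) ^ k = (A * W) ^ (k + 1) := by
  calc A * W * (A * W) * (Z * W) * (A * W) ^ k = A * (Q * (W * A) ^ k * W) := by
        rw [← hZ, Matrix.mul_assoc _ _ W, ← mul_mul_pow_comm]; simp only [Matrix.mul_assoc]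
    _ = (A * W) ^ (k + 1) := by
        rw [hQ, ← mul_mul_pow_comm, pow_succ']; simp only [Matrix.mul_assoc]

theorem mulVecLin_pow (M : Matrix n n R) (j : ℕ) : (M ^ j).mulVecLin = M.mulVecLin ^ j :=
  toLin'_pow M j

theorem range_mulVecLin_pow_antitone (M : Matrix n n R) :
    Antitone fun j => LinearMap.range (M ^ j).mulVecLin := by
  intro i j hij
  obtain ⟨d, rfl⟩ := Nat.exists_eq_add_of_le hij
  simp only [pow_add, mulVecLin_mul]
  exact LinearMap.range_comp_le_range _ _

theorem ker_mulVecLin_pow_monotone (M : Matrix n n R) :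
    Monotone fun j => LinearMap.ker (M ^ j).mulVecLin := by
  intro i j hij
  obtain ⟨d, rfl⟩ := Nat.exists_eq_add_of_le hij
  simp only [pow_add, (Commute.pow_pow_self M i d).eq, mulVecLin_mul]
  exact LinearMap.ker_le_ker_comp _ _

end Semiring

section Field

variable {K : Type*} [Field K] {n o : Type*} [Fintype n] [DecidableEq n] {c : ℕ}

theorem ker_mulVecLin_pow_eq_of_rank_pow_eq {M : Matrix n n K}
    (h : (M ^ c).rank = (M ^ (c + 1)).rank) {j : ℕ} (hj : c ≤ j) :
    LinearMap.ker (M ^ j).mulVecLin = LinearMap.ker (M ^ c).mulVecLin := by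
  have hsucc : LinearMap.ker (M ^ c).mulVecLin = LinearMap.ker (M ^ (c + 1)).mulVecLin := by
    refine Submodule.eq_of_le_of_finrank_eq (ker_mulVecLin_pow_monotone M c.le_succ) ?_
    have := (M ^ c).mulVecLin.finrank_range_add_finrank_ker
    have := (M ^ (c + 1)).mulVecLin.finrank_range_add_finrank_ker
    rw [rank, rank] at h
    omega
  obtain ⟨d, rfl⟩ := Nat.exists_eq_add_of_le hj
  simp only [mulVecLin_pow] at hsucc ⊢
  exact (Module.End.ker_pow_constant hsucc d).symm

theorem range_mulVecLin_pow_eq_of_rank_pow_eq {M : Matrix n n K}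
    (h : (M ^ c).rank = (M ^ (c + 1)).rank) {j : ℕ} (hj : c ≤ j) :
    LinearMap.range (M ^ j).mulVecLin = LinearMap.range (M ^ c).mulVecLin := by
  refine Submodule.eq_of_le_of_finrank_eq (range_mulVecLin_pow_antitone M hj) ?_
  have hc := (M ^ c).mulVecLin.finrank_range_add_finrank_ker
  have hj' := (M ^ j).mulVecLin.finrank_range_add_finrank_ker
  rw [ker_mulVecLin_pow_eq_of_rank_pow_eq h hj] at hj'
  omega

theorem range_mulVecLin_pow_le_of_rank_pow_eq {M : Matrix n n K}
    (h : (M ^ c).rank = (M ^ (c + 1)).rank) {j : ℕ} (hj : c ≤ j) (i : ℕ) :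
    LinearMap.range (M ^ j).mulVecLin ≤ LinearMap.range (M ^ i).mulVecLin := by
  rcases le_total i j with hij | hji
  · exact range_mulVecLin_pow_antitone M hij
  · rw [range_mulVecLin_pow_eq_of_rank_pow_eq h hj,
      range_mulVecLin_pow_eq_of_rank_pow_eq h (hj.trans hji)]

theorem mul_pow_succ_eq_pow_of_sq_mul_mul_pow {S Y : Matrix n n K} {k : ℕ}
    (hc : (S ^ c).rank = (S ^ (c + 1)).rank) (hck : c ≤ k)
    (hY : S * S * Y * S ^ k = S ^ (k + 1))
    (hYS : LinearMap.range Y.mulVecLin ≤ LinearMap.range (S ^ k).mulVecLin) :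
    Y * S ^ (k + 1) = S ^ k := by
  obtain ⟨V, rfl⟩ := exists_eq_mul_of_range_mulVecLin_le hYS
  have hker : LinearMap.ker (S ^ (k + 2)).mulVecLin ≤ LinearMap.ker (S ^ k).mulVecLin := by
    rw [ker_mulVecLin_pow_eq_of_rank_pow_eq hc (hck.trans (Nat.le_add_right k 2)),
      ker_mulVecLin_pow_eq_of_rank_pow_eq hc hck]
  have hfix : S ^ (k + 2) * (V * S ^ (k + 1)) = S ^ (k + 2) := by
    calc S ^ (k + 2) * (V * S ^ (k + 1)) = S * S * (S ^ k * V) * S ^ k * S := by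
          rw [pow_succ S k, show k + 2 = 1 + 1 + k by omega, pow_add, pow_add, pow_one]
          simp only [Matrix.mul_assoc]
      _ = S ^ (k + 2) := by rw [hY, ← pow_succ]
  have hzero : S ^ (k + 2) * (V * S ^ (k + 1) - 1) = 0 := by
    rw [Matrix.mul_sub, hfix, Matrix.mul_one, sub_self]
  have := mul_eq_zero_of_ker_mulVecLin_le hker hzero
  rwa [Matrix.mul_sub, Matrix.mul_one, sub_eq_zero, ← Matrix.mul_assoc] at this

variable [Fintype o] [DecidableEq o]

theorem mul_mul_pow_succ_eq_pow_of_coreEP {A Z : Matrix n o K} {W : Matrix o n K}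
    {Q : Matrix o o K} {k : ℕ}
    (hc : ((A * W) ^ c).rank = ((A * W) ^ (c + 1)).rank) (hck : c ≤ k)
    (hQ : Q * (W * A) ^ k = (W * A) ^ k) (hZ₁ : W * A * W * Z = Q)
    (hZ₂ : LinearMap.range Z.mulVecLin ≤ LinearMap.range ((A * W) ^ k).mulVecLin) :
    Z * W * (A * W) ^ (k + 1) = (A * W) ^ k := by
  refine mul_pow_succ_eq_pow_of_sq_mul_mul_pow hc hck (sq_mul_mul_pow_eq_pow_succ hQ hZ₁) ?_
  rw [mulVecLin_mul]
  exact (LinearMap.range_comp_le_range _ _).trans hZ₂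

end Field

end Matrix

theorem stmt_9_general {p n : ℕ} (A : Matrix (Fin p) (Fin n) ℂ)
    (W : Matrix (Fin n) (Fin p) ℂ)
    (k₁ k₂ k m : ℕ) (hm : 0 < m)
    (hk₁ : MatIndex (A * W) k₁) (hk₂ : MatIndex (W * A) k₂)
    (hk : k = max k₁ k₂)
    -- `Pk` is the orthogonal projector onto range((WA)^k)
    (Pk : Matrix (Fin n) (Fin n) ℂ)
    (hPk : IsOrthProjOnto Pk (LinearMap.range ((W * A) ^ k).mulVecLin))
    -- `Z` is the W-weighted core-EP inverse of `A`
    (Z : Matrix (Fin p) (Fin n) ℂ)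
    (hZ1 : W * A * W * Z = Pk)
    (hZ2 : LinearMap.range Z.mulVecLin ≤ LinearMap.range ((A * W) ^ k).mulVecLin)
    -- `G` is the W-weighted m-weak group inverse of `A`
    (G : Matrix (Fin p) (Fin n) ℂ)
    (hG1 : A * W * G = (Z * W) ^ m * (A * W) ^ (m - 1) * A)
    (hG2 : A * W * G * W * G = G)
    -- `P` is the orthogonal projector onto range((WA)^m)
    (P : Matrix (Fin n) (Fin n) ℂ)
    (hP : IsOrthProjOnto P (LinearMap.range ((W * A) ^ m).mulVecLin))
    -- `X` is the W-weighted m-weak core inverse of `A`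
    (X : Matrix (Fin p) (Fin n) ℂ) (hX : X = G * P) :
    X * W * (A * W) ^ (k + 1) = (A * W) ^ k := by
  have hZW : Z * W * (A * W) ^ (k + 1) = (A * W) ^ k :=
    mul_mul_pow_succ_eq_pow_of_coreEP hk₁.1 (hk ▸ le_max_left k₁ k₂)
      (mul_eq_self_of_range_mulVecLin_le hPk.1 hPk.2.2.ge) hZ1 hZ2
  have hGW : G * W * (A * W) ^ (k + 1) = (A * W) ^ k := by
    refine mul_pow_succ_eq_pow_of_weak_group hm hZW ?_ ?_
    · rw [← Matrix.mul_assoc, hG1, Matrix.mul_assoc _ A W, Matrix.mul_assoc, ← pow_succ,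
        Nat.sub_add_cancel hm]
    · simp only [← Matrix.mul_assoc, hG2]
  have hPW : P * (W * (A * W) ^ (k + 1)) = W * (A * W) ^ (k + 1) := by
    rw [mul_mul_pow_comm, ← Matrix.mul_assoc]
    congr 1
    refine mul_eq_self_of_range_mulVecLin_le hP.1 (hP.2.2 ▸ ?_)
    exact range_mulVecLin_pow_le_of_rank_pow_eq hk₂.1 (by omega) m
  calc X * W * (A * W) ^ (k + 1) = G * (P * (W * (A * W) ^ (k + 1))) := by
        rw [hX]; simp only [Matrix.mul_assoc]
    _ = (A * W) ^ k := by rw [hPW, ← Matrix.mul_assoc, hGW]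

theorem stmt_9 {p n : ℕ} (A : Matrix (Fin p) (Fin n) ℂ)
    (W : Matrix (Fin n) (Fin p) ℂ) (hW : W ≠ 0)
    (k₁ k₂ k m : ℕ) (hm : 0 < m)
    (hk₁ : MatIndex (A * W) k₁) (hk₂ : MatIndex (W * A) k₂)
    (hk : k = max k₁ k₂)
    -- `Pk` is the orthogonal projector onto range((WA)^k)
    (Pk : Matrix (Fin n) (Fin n) ℂ)
    (hPk : IsOrthProjOnto Pk (LinearMap.range ((W * A) ^ k).mulVecLin))
    -- `Z` is the W-weighted core-EP inverse of `A`
    (Z : Matrix (Fin p) (Fin n) ℂ)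
    (hZ1 : W * A * W * Z = Pk)
    (hZ2 : LinearMap.range Z.mulVecLin ≤ LinearMap.range ((A * W) ^ k).mulVecLin)
    -- `G` is the W-weighted m-weak group inverse of `A`
    (G : Matrix (Fin p) (Fin n) ℂ)
    (hG1 : A * W * G = (Z * W) ^ m * (A * W) ^ (m - 1) * A)
    (hG2 : A * W * G * W * G = G)
    -- `P` is the orthogonal projector onto range((WA)^m)
    (P : Matrix (Fin n) (Fin n) ℂ)
    (hP : IsOrthProjOnto P (LinearMap.range ((W * A) ^ m).mulVecLin))
    -- `X` is the W-weighted m-weak core inverse of `A`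
    (X : Matrix (Fin p) (Fin n) ℂ) (hX : X = G * P) :
    X * W * (A * W) ^ (k + 1) = (A * W) ^ k :=
  stmt_9_general A W k₁ k₂ k m hm hk₁ hk₂ hk Pk hPk Z hZ1 hZ2 G hG1 hG2 P hP X hX
end

section
/- Let A be a p×n complex matrix, W a nonzero n×p complex matrix, and k = max{Ind(AW), Ind(WA)}. If X is the W-weighted m-weak core inverse of A, then range(X) = range((AW)^k). -/
/-!
Write `B = AW` and `C = WA`, and let `k` be at least the index of `B`. Since the ranks of the
powers of `B` have stabilised at `k`, the kernels of `B^k` and `B^(k+j)` agree, so left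
multiplication by a power of `B` is injective on matrices with columns in `range B^k`.
Cancelling `B²` gives the core-EP identity `Z W B^(k+1) = B^k`; iterating it and cancelling
one `B` gives `G W B^(k+m+1) = B^(k+m)`, and since `P` fixes `C^(k+m+1)` also
`X W B^(k+m+1) = B^(k+m)`. Hence `range B^k = range B^(k+m) ≤ range X`, while
`X = G P` with `G = Z (…)` gives `range X ≤ range Z ≤ range B^k`.
-/

open Matrix

theorem pow_mul_pow_add_eq_of_mul_pow_succ_eq {M : Type*} [Monoid M] {u b : M} {k : ℕ}
    (h : u * b ^ (k + 1) = b ^ k) (s : ℕ) : u ^ s * b ^ (k + s) = b ^ k := by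
  induction s with
  | zero => simp
  | succ s ih =>
    calc u ^ (s + 1) * b ^ (k + (s + 1)) = u ^ s * (u * b ^ (k + 1)) * b ^ s := by
          rw [pow_succ, show k + (s + 1) = k + 1 + s by omega, pow_add]; noncomm_ring
      _ = u ^ s * b ^ (k + s) := by rw [h, pow_add, mul_assoc]
      _ = b ^ k := ih

namespace Matrix

theorem mul_mul_pow_eq_mul_pow_mul {R : Type*} [Semiring R] {m n : Type*} [Fintype m] [Fintype n]
    [DecidableEq m] [DecidableEq n] (A : Matrix m n R) (W : Matrix n m R) (j : ℕ) :
    W * (A * W) ^ j = (W * A) ^ j * W := by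
  induction j with
  | zero => simp
  | succ j ih => rw [pow_succ, ← Matrix.mul_assoc, ih, pow_succ, Matrix.mul_assoc,
      Matrix.mul_assoc, Matrix.mul_assoc]

variable {K : Type*} [Field K] {l m n : Type*}

theorem range_mulVecLin_mul_le [Fintype m] [Fintype n] (M : Matrix l m K) (N : Matrix m n K) :
    LinearMap.range (M * N).mulVecLin ≤ LinearMap.range M.mulVecLin := by
  rw [mulVecLin_mul]
  exact LinearMap.range_comp_le_range _ _

variable [Fintype n] [DecidableEq n]

theorem range_pow_eq_of_rank_eq {M : Matrix n n K} {k : ℕ}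
    (h : (M ^ k).rank = (M ^ (k + 1)).rank) {j : ℕ} (hj : k ≤ j) :
    LinearMap.range (M ^ j).mulVecLin = LinearMap.range (M ^ k).mulVecLin := by
  have hsucc : LinearMap.range (M ^ (k + 1)).mulVecLin = LinearMap.range (M ^ k).mulVecLin :=
    Submodule.eq_of_le_of_finrank_le
      (by rw [pow_succ]; exact range_mulVecLin_mul_le _ _) h.le
  induction j, hj using Nat.le_induction with
  | base => rfl
  | succ j _ ih =>
    rw [pow_succ', mulVecLin_mul, LinearMap.range_comp, ih, ← LinearMap.range_comp,
      ← mulVecLin_mul, ← pow_succ', hsucc]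

theorem rank_pow_succ_eq_of_le {M : Matrix n n K} {k₀ : ℕ}
    (h : (M ^ k₀).rank = (M ^ (k₀ + 1)).rank) {k : ℕ} (hk : k₀ ≤ k) :
    (M ^ k).rank = (M ^ (k + 1)).rank := by
  unfold rank
  rw [range_pow_eq_of_rank_eq h hk, range_pow_eq_of_rank_eq h (hk.trans k.le_succ)]

theorem ker_pow_add_eq_of_rank_eq {M : Matrix n n K} {k : ℕ}
    (h : (M ^ k).rank = (M ^ (k + 1)).rank) (j : ℕ) :
    LinearMap.ker (M ^ (k + j)).mulVecLin = LinearMap.ker (M ^ k).mulVecLin := by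
  refine (Submodule.eq_of_le_of_finrank_eq ?_ ?_).symm
  · rw [add_comm, pow_add, mulVecLin_mul]
    exact LinearMap.ker_le_ker_comp _ _
  · have hk := (M ^ k).mulVecLin.finrank_range_add_finrank_ker
    have hkj := (M ^ (k + j)).mulVecLin.finrank_range_add_finrank_ker
    rw [range_pow_eq_of_rank_eq h (k.le_add_right j)] at hkj
    omega

theorem pow_mul_left_cancel_of_rank_eq [Fintype l] {M : Matrix n n K} {k : ℕ}
    (h : (M ^ k).rank = (M ^ (k + 1)).rank) {Y Y' : Matrix n l K}
    (hY : LinearMap.range Y.mulVecLin ≤ LinearMap.range (M ^ k).mulVecLin)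
    (hY' : LinearMap.range Y'.mulVecLin ≤ LinearMap.range (M ^ k).mulVecLin)
    {j : ℕ} (hMY : M ^ j * Y = M ^ j * Y') : Y = Y' := by
  refine ext_iff_mulVec.mpr fun v => ?_
  obtain ⟨a, ha⟩ := hY ⟨v, rfl⟩
  obtain ⟨b, hb⟩ := hY' ⟨v, rfl⟩
  simp only [mulVecLin_apply] at ha hb
  have hab : a - b ∈ LinearMap.ker (M ^ (k + j)).mulVecLin := by
    rw [LinearMap.mem_ker, mulVecLin_apply, add_comm, pow_add, ← mulVec_mulVec, mulVec_sub,
      ha, hb, mulVec_sub, mulVec_mulVec, mulVec_mulVec, hMY, sub_self]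
  rw [ker_pow_add_eq_of_rank_eq h, LinearMap.mem_ker, mulVecLin_apply, mulVec_sub,
    sub_eq_zero] at hab
  rw [← ha, ← hb, hab]

end Matrix

theorem IsOrthProjOnto.mul_eq_self {p : ℕ} {l : Type*} [Fintype l]
    {P : Matrix (Fin p) (Fin p) ℂ} {S : Submodule ℂ (Fin p → ℂ)} (hP : IsOrthProjOnto P S)
    {M : Matrix (Fin p) l ℂ} (hM : LinearMap.range M.mulVecLin ≤ S) : P * M = M := by
  obtain ⟨hidem, -, hrange⟩ := hP
  refine ext_iff_mulVec.mpr fun v => ?_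
  obtain ⟨u, hu⟩ := hrange ▸ hM ⟨v, rfl⟩
  simp only [mulVecLin_apply] at hu
  rw [← mulVec_mulVec, ← hu, mulVec_mulVec, hidem]

theorem mul_mul_pow_succ_eq_pow_of_coreEP {p n : ℕ} {A : Matrix (Fin p) (Fin n) ℂ}
    {W : Matrix (Fin n) (Fin p) ℂ} {k : ℕ}
    (hk : ((A * W) ^ k).rank = ((A * W) ^ (k + 1)).rank) {Pk : Matrix (Fin n) (Fin n) ℂ}
    (hPk : IsOrthProjOnto Pk (LinearMap.range ((W * A) ^ k).mulVecLin))
    {Z : Matrix (Fin p) (Fin n) ℂ} (hZ1 : W * A * W * Z = Pk)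
    (hZ2 : LinearMap.range Z.mulVecLin ≤ LinearMap.range ((A * W) ^ k).mulVecLin) :
    Z * W * (A * W) ^ (k + 1) = (A * W) ^ k := by
  have hPk_fix : Pk * (W * A) ^ (k + 1) = (W * A) ^ (k + 1) :=
    hPk.mul_eq_self (by rw [pow_succ]; exact range_mulVecLin_mul_le _ _)
  refine pow_mul_left_cancel_of_rank_eq hk (j := 2) ?_ le_rfl ?_
  · rw [Matrix.mul_assoc]
    exact (range_mulVecLin_mul_le _ _).trans hZ2
  · calc (A * W) ^ 2 * (Z * W * (A * W) ^ (k + 1))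
        = A * (W * A * W * Z * (W * (A * W) ^ (k + 1))) := by
          simp only [sq, Matrix.mul_assoc]
      _ = A * (W * A) ^ (k + 1) * W := by
          rw [hZ1, mul_mul_pow_eq_mul_pow_mul, ← Matrix.mul_assoc Pk, hPk_fix, Matrix.mul_assoc]
      _ = (A * W) ^ 2 * (A * W) ^ k := by
          rw [mul_mul_pow_eq_mul_pow_mul W A, Matrix.mul_assoc, ← pow_succ, ← pow_add]
          ring_nf

section WeakGroup

variable {K : Type*} [Field K] {ι κ : Type*} [Fintype ι] [DecidableEq ι] [Fintype κ]
  {A : Matrix ι κ K} {W : Matrix κ ι K} {Z G : Matrix ι κ K} {m : ℕ}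

theorem range_mulVecLin_le_of_weakGroup (hG1 : A * W * G = (Z * W) ^ (m + 1) * (A * W) ^ m * A)
    (hG2 : A * W * G * W * G = G) : LinearMap.range G.mulVecLin ≤ LinearMap.range Z.mulVecLin := by
  have hG : G = Z * (W * (Z * W) ^ m * (A * W) ^ m * A * W * G) := by
    conv_lhs => rw [← hG2, hG1, pow_succ']
    simp only [Matrix.mul_assoc]
  rw [hG]
  exact range_mulVecLin_mul_le _ _

theorem mul_mul_pow_eq_pow_of_weakGroup [DecidableEq κ] {k : ℕ}
    (hk : ((A * W) ^ k).rank = ((A * W) ^ (k + 1)).rank)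
    (hZW : Z * W * (A * W) ^ (k + 1) = (A * W) ^ k)
    (hZ : LinearMap.range Z.mulVecLin ≤ LinearMap.range ((A * W) ^ k).mulVecLin)
    (hG1 : A * W * G = (Z * W) ^ (m + 1) * (A * W) ^ m * A) (hG2 : A * W * G * W * G = G) :
    G * W * (A * W) ^ (k + m + 1) = (A * W) ^ (k + m) := by
  refine pow_mul_left_cancel_of_rank_eq hk (j := 1) ?_ ?_ ?_
  · rw [Matrix.mul_assoc]
    exact (range_mulVecLin_mul_le _ _).trans
      ((range_mulVecLin_le_of_weakGroup hG1 hG2).trans hZ)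
  · rw [pow_add]
    exact range_mulVecLin_mul_le _ _
  · calc (A * W) ^ 1 * (G * W * (A * W) ^ (k + m + 1))
        = (Z * W) ^ (m + 1) * ((A * W) ^ m * (A * W) * (A * W) ^ (k + m + 1)) := by
          rw [pow_one]
          simp only [← Matrix.mul_assoc]
          rw [hG1]
      _ = (Z * W) ^ (m + 1) * (A * W) ^ (k + (m + 1)) * (A * W) ^ (m + 1) := by
          rw [← pow_succ, ← pow_add, Matrix.mul_assoc, ← pow_add]
          ring_nf
      _ = (A * W) ^ 1 * (A * W) ^ (k + m) := by
          rw [pow_mul_pow_add_eq_of_mul_pow_succ_eq hZW, ← pow_add, ← pow_add]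
          ring_nf

end WeakGroup

theorem stmt_10_general {p n : ℕ} (A : Matrix (Fin p) (Fin n) ℂ)
    (W : Matrix (Fin n) (Fin p) ℂ)
    (k₁ k₂ k m : ℕ) (hm : 0 < m)
    (hk₁ : MatIndex (A * W) k₁)
    (hk : k = max k₁ k₂)
    -- `Pk` is the orthogonal projector onto range((WA)^k)
    (Pk : Matrix (Fin n) (Fin n) ℂ)
    (hPk : IsOrthProjOnto Pk (LinearMap.range ((W * A) ^ k).mulVecLin))
    -- `Z` is the W-weighted core-EP inverse of `A`
    (Z : Matrix (Fin p) (Fin n) ℂ)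
    (hZ1 : W * A * W * Z = Pk)
    (hZ2 : LinearMap.range Z.mulVecLin ≤ LinearMap.range ((A * W) ^ k).mulVecLin)
    -- `G` is the W-weighted m-weak group inverse of `A`
    (G : Matrix (Fin p) (Fin n) ℂ)
    (hG1 : A * W * G = (Z * W) ^ m * (A * W) ^ (m - 1) * A)
    (hG2 : A * W * G * W * G = G)
    -- `P` is the orthogonal projector onto range((WA)^m)
    (P : Matrix (Fin n) (Fin n) ℂ)
    (hP : IsOrthProjOnto P (LinearMap.range ((W * A) ^ m).mulVecLin))
    -- `X` is the W-weighted m-weak core inverse of `A`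
    (X : Matrix (Fin p) (Fin n) ℂ) (hX : X = G * P) :
    LinearMap.range X.mulVecLin = LinearMap.range ((A * W) ^ k).mulVecLin := by
  obtain ⟨m, rfl⟩ := Nat.exists_eq_add_one_of_ne_zero hm.ne'
  rw [Nat.add_sub_cancel] at hG1
  have hk_rank : ((A * W) ^ k).rank = ((A * W) ^ (k + 1)).rank :=
    rank_pow_succ_eq_of_le hk₁.1 (hk ▸ le_max_left k₁ k₂)
  have hZW := mul_mul_pow_succ_eq_pow_of_coreEP hk_rank hPk hZ1 hZ2
  have hP_fix : P * (W * A) ^ (k + m + 1) = (W * A) ^ (k + m + 1) := hP.mul_eq_self <| by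
    rw [show k + m + 1 = m + 1 + k by omega, pow_add]
    exact range_mulVecLin_mul_le _ _
  have hXW : X * W * (A * W) ^ (k + m + 1) = (A * W) ^ (k + m) := by
    rw [hX, ← mul_mul_pow_eq_pow_of_weakGroup hk_rank hZW hZ2 hG1 hG2, Matrix.mul_assoc,
      Matrix.mul_assoc, mul_mul_pow_eq_mul_pow_mul, ← Matrix.mul_assoc P, hP_fix,
      ← mul_mul_pow_eq_mul_pow_mul, Matrix.mul_assoc]
  refine le_antisymm ?_ ?_
  · rw [hX]
    exact (range_mulVecLin_mul_le _ _).trans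
      ((range_mulVecLin_le_of_weakGroup hG1 hG2).trans hZ2)
  · calc LinearMap.range ((A * W) ^ k).mulVecLin
        = LinearMap.range ((A * W) ^ (k + m)).mulVecLin :=
          (range_pow_eq_of_rank_eq hk_rank (k.le_add_right m)).symm
      _ ≤ LinearMap.range X.mulVecLin := by
          rw [← hXW, Matrix.mul_assoc]
          exact range_mulVecLin_mul_le _ _

theorem stmt_10 {p n : ℕ} (A : Matrix (Fin p) (Fin n) ℂ)
    (W : Matrix (Fin n) (Fin p) ℂ) (hW : W ≠ 0)
    (k₁ k₂ k m : ℕ) (hm : 0 < m)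
    (hk₁ : MatIndex (A * W) k₁) (hk₂ : MatIndex (W * A) k₂)
    (hk : k = max k₁ k₂)
    -- `Pk` is the orthogonal projector onto range((WA)^k)
    (Pk : Matrix (Fin n) (Fin n) ℂ)
    (hPk : IsOrthProjOnto Pk (LinearMap.range ((W * A) ^ k).mulVecLin))
    -- `Z` is the W-weighted core-EP inverse of `A`
    (Z : Matrix (Fin p) (Fin n) ℂ)
    (hZ1 : W * A * W * Z = Pk)
    (hZ2 : LinearMap.range Z.mulVecLin ≤ LinearMap.range ((A * W) ^ k).mulVecLin)
    -- `G` is the W-weighted m-weak group inverse of `A`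
    (G : Matrix (Fin p) (Fin n) ℂ)
    (hG1 : A * W * G = (Z * W) ^ m * (A * W) ^ (m - 1) * A)
    (hG2 : A * W * G * W * G = G)
    -- `P` is the orthogonal projector onto range((WA)^m)
    (P : Matrix (Fin n) (Fin n) ℂ)
    (hP : IsOrthProjOnto P (LinearMap.range ((W * A) ^ m).mulVecLin))
    -- `X` is the W-weighted m-weak core inverse of `A`
    (X : Matrix (Fin p) (Fin n) ℂ) (hX : X = G * P) :
    LinearMap.range X.mulVecLin = LinearMap.range ((A * W) ^ k).mulVecLin :=
  stmt_10_general A W k₁ k₂ k m hm hk₁ hk Pk hPk Z hZ1 hZ2 G hG1 hG2 P hP X hX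
end

section
/- Let A be an n×n complex matrix of index k and m a positive integer. Suppose X satisfies A·X = (A^⊕)^m · A^m · P_{A^m} and A·X² = X, where A^⊕ is the core-EP inverse of A and P_{A^m} the orthogonal projector onto range(A^m). Then range(X) ⊆ range(A^k), and X is the unique matrix satisfying these two conditions (i.e., any two solutions coincide). -/
open Matrix

/-! From `A X² = X` one gets `X = A^ℓ X^(ℓ+1)` for every `ℓ`, so `X` takes values in
`range A^k`. If `rank A^k = rank A^(k+1)`, then `A` maps `range A^k` onto `range A^(k+1)` without
dropping dimension, so it is injective there; two solutions have the same `A X`, hence coincide. -/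

theorem eq_pow_mul_pow_succ_of_mul_sq_eq {M : Type*} [Monoid M] {a y : M} (h : a * y ^ 2 = y)
    (ℓ : ℕ) : y = a ^ ℓ * y ^ (ℓ + 1) := by
  induction ℓ with
  | zero => simp
  | succ ℓ ih =>
    calc y = a * (y * y) := by rw [← sq, h]
      _ = a * (a ^ ℓ * y ^ (ℓ + 1) * y) := by rw [← ih]
      _ = a ^ (ℓ + 1) * y ^ (ℓ + 2) := by
        rw [pow_succ' a ℓ, show ℓ + 2 = ℓ + 1 + 1 from rfl, pow_succ y (ℓ + 1)]
        simp only [mul_assoc]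

namespace Matrix

variable {ι R K : Type*} [Fintype ι]

theorem range_mulVecLin_le_range_pow_of_mul_sq_eq [DecidableEq ι] [CommSemiring R]
    {A Y : Matrix ι ι R} (h : A * Y ^ 2 = Y) (ℓ : ℕ) :
    LinearMap.range Y.mulVecLin ≤ LinearMap.range (A ^ ℓ).mulVecLin := by
  rw [eq_pow_mul_pow_succ_of_mul_sq_eq h ℓ, mulVecLin_mul]
  exact LinearMap.range_comp_le_range _ _

theorem disjoint_range_pow_ker_of_rank_pow_eq [DecidableEq ι] [Field K] (A : Matrix ι ι K)
    {k : ℕ} (h : (A ^ k).rank = (A ^ (k + 1)).rank) :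
    Disjoint (LinearMap.range (A ^ k).mulVecLin) (LinearMap.ker A.mulVecLin) := by
  refine Submodule.disjoint_ker_of_finrank_le _ ?_
  rw [← LinearMap.range_comp, ← mulVecLin_mul, ← pow_succ']
  exact h.le

theorem eq_of_mul_eq_mul_of_range_le [CommRing R] {A X X' : Matrix ι ι R}
    {S : Submodule R (ι → R)} (hS : Disjoint S (LinearMap.ker A.mulVecLin))
    (hX : LinearMap.range X.mulVecLin ≤ S) (hX' : LinearMap.range X'.mulVecLin ≤ S)
    (hAX : A * X = A * X') : X = X' := by
  refine ext_iff_mulVec.mpr fun v ↦ LinearMap.disjoint_ker_iff_injOn.mp hS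
    (hX ⟨v, rfl⟩) (hX' ⟨v, rfl⟩) ?_
  simp only [mulVecLin_apply, mulVec_mulVec, hAX]

end Matrix

theorem stmt_19_general {n : ℕ} (A : Matrix (Fin n) (Fin n) ℂ) (k m : ℕ)
    (hk : MatIndex A k)
    -- `E` is the core-EP inverse of `A`
    (E : Matrix (Fin n) (Fin n) ℂ)
    -- `P` is the orthogonal projector onto range(A^m)
    (P : Matrix (Fin n) (Fin n) ℂ)
    (X : Matrix (Fin n) (Fin n) ℂ)
    (hX1 : A * X = E ^ m * A ^ m * P) (hX2 : A * X ^ 2 = X) :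
    LinearMap.range X.mulVecLin ≤ LinearMap.range (A ^ k).mulVecLin ∧
    ∀ X' : Matrix (Fin n) (Fin n) ℂ,
      A * X' = E ^ m * A ^ m * P → A * X' ^ 2 = X' → X' = X := by
  have hX := range_mulVecLin_le_range_pow_of_mul_sq_eq hX2 k
  refine ⟨hX, fun X' hX1' hX2' ↦ ?_⟩
  exact eq_of_mul_eq_mul_of_range_le (A.disjoint_range_pow_ker_of_rank_pow_eq hk.1)
    (range_mulVecLin_le_range_pow_of_mul_sq_eq hX2' k) hX (hX1'.trans hX1.symm)

theorem stmt_19 {n : ℕ} (A : Matrix (Fin n) (Fin n) ℂ) (k m : ℕ)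
    (hk : MatIndex A k) (hm : 0 < m)
    -- `E` is the core-EP inverse of `A`
    (E : Matrix (Fin n) (Fin n) ℂ)
    (hE1 : E * A * E = E)
    (hE2 : LinearMap.range E.mulVecLin = LinearMap.range (A ^ k).mulVecLin)
    (hE3 : LinearMap.range Eᴴ.mulVecLin = LinearMap.range (A ^ k).mulVecLin)
    -- `P` is the orthogonal projector onto range(A^m)
    (P : Matrix (Fin n) (Fin n) ℂ)
    (hP : IsOrthProjOnto P (LinearMap.range (A ^ m).mulVecLin))
    (X : Matrix (Fin n) (Fin n) ℂ)
    (hX1 : A * X = E ^ m * A ^ m * P) (hX2 : A * X ^ 2 = X) :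
    LinearMap.range X.mulVecLin ≤ LinearMap.range (A ^ k).mulVecLin ∧
    ∀ X' : Matrix (Fin n) (Fin n) ℂ,
      A * X' = E ^ m * A ^ m * P → A * X' ^ 2 = X' → X' = X :=
  stmt_19_general A k m hk E P X hX1 hX2
end
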